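/- arXiv:1709.06130 — 6 statements merged into one kernel-verified Lean document; each statement's English description precedes it below -/
import Mathlib

section
/- For every integer k ≥ 1, there exists a k-edge-coloring of the complete graph on 4·2^k vertices that contains no rainbow triangle and no monochromatic copy of the cycle C_9. -/
/-- `c` contains a rainbow triangle: three distinct vertices whose three
connecting edges receive pairwise distinct colors. -/
def HasRainbowTriangle {V C : Type*} (c : V → V → C) : Prop :=
  ∃ a b d : V, a ≠ b ∧ a ≠ d ∧ b ≠ d ∧
    c a b ≠ c a d ∧ c a b ≠ c b d ∧ c a d ≠ c b d

/-- `c` contains a cycle on `m` vertices all of whose edges have color `col`. -/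
def HasMonoCycleIn {V C : Type*} (c : V → V → C) (m : ℕ) [NeZero m] (col : C) : Prop :=
  ∃ v : Fin m → V, Function.Injective v ∧ ∀ i : Fin m, c (v i) (v (i + 1)) = col

/-- `c` contains a monochromatic cycle on `m` vertices. -/
def HasMonoCycle {V C : Type*} (c : V → V → C) (m : ℕ) [NeZero m] : Prop :=
  ∃ col : C, HasMonoCycleIn c m col

/-!
Colour the edge `xy` by the position of the highest bit in which `x` and `y` differ, lowered by
two so that the three lowest bits share colour `0`. The highest differing bit is an ultrametric,
so in every triangle the largest colour occurs twice. An edge of colour `i ≥ 1` joins vertices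
whose bit `i + 2` differs, so that colour class is bipartite and has no odd cycle; an edge of
colour `0` stays inside a block of eight consecutive vertices, too few to carry a `C₉`.
-/

open Finset

section Colorings

open Fin.NatCast

variable {V C : Type*} {c : V → V → C}

theorem not_hasRainbowTriangle_of_ultrametric [LinearOrder C] (hsymm : ∀ x y, c x y = c y x)
    (hultra : ∀ x y z, c x z ≤ max (c x y) (c y z)) : ¬ HasRainbowTriangle c := by
  rintro ⟨a, b, d, -, -, -, hab_ad, hab_bd, had_bd⟩
  have h₁ := hultra a d b
  have h₂ := hultra a b d
  have h₃ := hultra b a d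
  rw [hsymm d b] at h₁
  rw [hsymm b a] at h₃
  simp only [le_max_iff] at h₁ h₂ h₃
  rcases h₁ with h₁ | h₁ <;> rcases h₂ with h₂ | h₂ <;> rcases h₃ with h₃ | h₃ <;> order

variable {m : ℕ} [NeZero m] {col : C} {v : Fin m → V}

theorem adj_natCast_of_mono_cycle (hv : ∀ i : Fin m, c (v i) (v (i + 1)) = col) (j : ℕ) :
    c (v j) (v (j + 1 : ℕ)) = col := by
  simpa only [Nat.cast_succ] using hv j

theorem not_hasMonoCycleIn_of_odd (hm : Odd m) (f : V → Bool)
    (hf : ∀ x y, c x y = col → f x ≠ f y) : ¬ HasMonoCycleIn c m col := by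
  rintro ⟨v, -, hv⟩
  have hflip (j : ℕ) : f (v (j + 1 : ℕ)) = !f (v j) :=
    Bool.eq_not.mpr (hf _ _ (adj_natCast_of_mono_cycle hv j)).symm
  have heven (j : ℕ) : f (v (2 * j : ℕ)) = f (v 0) := by
    induction j with
    | zero => simp
    | succ j ih => rw [show 2 * (j + 1) = 2 * j + 1 + 1 by ring, hflip, hflip, ih, Bool.not_not]
  obtain ⟨t, rfl⟩ := hm
  have := hflip (2 * t)
  rw [Fin.natCast_self, heven] at this
  exact (Bool.eq_not_self _).mp this

theorem not_hasMonoCycleIn_of_card_fiber_lt [Fintype V] {β : Type*} [DecidableEq β] (h : V → β)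
    (hh : ∀ x y, c x y = col → h x = h y) (hfib : ∀ b, #{x | h x = b} < m) :
    ¬ HasMonoCycleIn c m col := by
  rintro ⟨v, hinj, hv⟩
  have hconst (j : ℕ) : h (v j) = h (v 0) := by
    induction j with
    | zero => simp
    | succ j ih => rw [← hh _ _ (adj_natCast_of_mono_cycle hv j), ih]
  have : m ≤ #{x | h x = h (v 0)} := by
    simpa using Finset.card_le_card_of_injOn (s := Finset.univ) v
      (fun i _ => by simpa [Fin.cast_val_eq_self] using hconst i) hinj.injOn
  exact (hfib _).not_ge this

end Colorings

namespace Nat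

theorem log2_xor_le_max (a b c : ℕ) : (a ^^^ c).log2 ≤ max (a ^^^ b).log2 (b ^^^ c).log2 := by
  rcases eq_or_ne (a ^^^ c) 0 with h | h
  · simp [h, Nat.log2_zero]
  have hlt {x y : ℕ} (hxy : x.log2 ≤ y) : x < 2 ^ (y + 1) :=
    Nat.lt_log2_self.trans_le (Nat.pow_le_pow_right two_pos (by omega))
  have hsplit : a ^^^ c = (a ^^^ b) ^^^ (b ^^^ c) := by
    rw [Nat.xor_assoc, Nat.xor_xor_cancel_left]
  rw [← Nat.lt_succ_iff, Nat.log2_lt h, hsplit]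
  exact Nat.xor_lt_two_pow (hlt (le_max_left _ _)) (hlt (le_max_right _ _))

theorem testBit_log2_xor_ne {x y : ℕ} (h : x ≠ y) :
    x.testBit (x ^^^ y).log2 ≠ y.testBit (x ^^^ y).log2 := by
  have := Nat.testBit_log2 (mt Nat.eq_of_xor_eq_zero h)
  rw [Nat.testBit_xor] at this
  simpa using this

theorem div_two_pow_eq_of_log2_xor_lt {x y n : ℕ} (h : (x ^^^ y).log2 < n) :
    x / 2 ^ n = y / 2 ^ n := by
  rcases eq_or_ne (x ^^^ y) 0 with h0 | h0
  · rw [Nat.eq_of_xor_eq_zero h0]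
  refine Nat.eq_of_testBit_eq fun i => ?_
  have := Nat.testBit_eq_false_of_lt
    (((Nat.log2_lt h0).mp h).trans_le (Nat.pow_le_pow_right two_pos (Nat.le_add_left n i)))
  rw [Nat.testBit_xor] at this
  simpa [Nat.testBit_div_two_pow] using this

end Nat

theorem Fin.card_filter_val_div_eq_le {N q : ℕ} (hq : 0 < q) (b : ℕ) :
    #{x : Fin N | x.val / q = b} ≤ q := by
  calc #{x : Fin N | x.val / q = b}
      ≤ #(range q) := by
        refine Finset.card_le_card_of_injOn (fun x => x.val % q)
          (fun x _ => Finset.mem_range.mpr (Nat.mod_lt _ hq)) fun x hx y hy hxy => ?_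
        simp only [coe_filter, mem_univ, true_and, Set.mem_ofPred_eq] at hx hy
        rw [Fin.ext_iff, ← Nat.div_add_mod x.val q, ← Nat.div_add_mod y.val q, hx, hy]
        exact congrArg _ hxy
    _ = q := card_range q

def bitColor (x y : ℕ) : ℕ := (x ^^^ y).log2 - 2

theorem bitColor_comm (x y : ℕ) : bitColor x y = bitColor y x := by
  rw [bitColor, bitColor, Nat.xor_comm]

theorem bitColor_le_max (x y z : ℕ) : bitColor x z ≤ max (bitColor x y) (bitColor y z) := by
  have := Nat.log2_xor_le_max x y z
  simp only [bitColor]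
  omega

theorem bitColor_lt {k x y : ℕ} (hk : 1 ≤ k) (hx : x < 4 * 2 ^ k) (hy : y < 4 * 2 ^ k) :
    bitColor x y < k := by
  rw [show 4 * 2 ^ k = 2 ^ (k + 2) by ring] at hx hy
  rcases eq_or_ne (x ^^^ y) 0 with h | h
  · simp only [bitColor, h, Nat.log2_zero]
    omega
  have := (Nat.log2_lt h).mpr (Nat.xor_lt_two_pow hx hy)
  simp only [bitColor]
  omega

theorem testBit_ne_of_bitColor_eq {x y i : ℕ} (hi : 0 < i) (h : bitColor x y = i) :
    x.testBit (i + 2) ≠ y.testBit (i + 2) := by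
  have hxy : x ≠ y := by
    rintro rfl
    simp only [bitColor, Nat.xor_self, Nat.log2_zero] at h
    omega
  have hlog : (x ^^^ y).log2 = i + 2 := by
    simp only [bitColor] at h
    omega
  simpa only [hlog] using Nat.testBit_log2_xor_ne hxy

theorem div_eight_eq_of_bitColor_eq_zero {x y : ℕ} (h : bitColor x y = 0) : x / 8 = y / 8 :=
  Nat.div_two_pow_eq_of_log2_xor_lt (n := 3) (by simp only [bitColor] at h; omega)

/-- There is a `k`-edge-coloring of the complete graph on `4·2^k` vertices with
no rainbow triangle and no monochromatic `C₉`. -/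
theorem gallaiRamsey_C9_lower (k : ℕ) (hk : 1 ≤ k) :
    ∃ c : Fin (4 * 2 ^ k) → Fin (4 * 2 ^ k) → Fin k,
      (∀ x y, c x y = c y x) ∧ ¬ HasRainbowTriangle c ∧ ¬ HasMonoCycle c 9 := by
  have hsymm (x y : Fin (4 * 2 ^ k)) :
      (⟨bitColor x y, bitColor_lt hk x.2 y.2⟩ : Fin k) = ⟨bitColor y x, bitColor_lt hk y.2 x.2⟩ :=
    Fin.ext (bitColor_comm x y)
  refine ⟨fun x y => ⟨bitColor x y, bitColor_lt hk x.2 y.2⟩, hsymm, ?_, ?_⟩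
  · refine not_hasRainbowTriangle_of_ultrametric hsymm fun x y z => ?_
    simpa only [le_max_iff, Fin.mk_le_mk] using le_max_iff.mp (bitColor_le_max x y z)
  · rintro ⟨⟨i, _⟩, hcycle⟩
    rcases Nat.eq_zero_or_pos i with rfl | hi
    · refine not_hasMonoCycleIn_of_card_fiber_lt (fun x : Fin (4 * 2 ^ k) => x.val / 8)
        (fun x y h => div_eight_eq_of_bitColor_eq_zero (congrArg Fin.val h))
        (fun b => (Fin.card_filter_val_div_eq_le (by norm_num) b).trans_lt (by norm_num)) hcycle
    · exact not_hasMonoCycleIn_of_odd (by decide) (fun x : Fin (4 * 2 ^ k) => x.val.testBit (i + 2))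
        (fun x y h => testBit_ne_of_bitColor_eq hi (congrArg Fin.val h)) hcycle
end

section
/- For all integers k ≥ 2 and n ≥ 2, the Gallai-Ramsey number satisfies gr_k(K_3, C_{2n+1}) ≥ n·2^k + 1; equivalently, there exists a k-edge-coloring of the complete graph on n·2^k vertices that contains no rainbow triangle and no monochromatic copy of the cycle C_{2n+1}. -/
theorem Nat.size_xor_le_max (a b c : ℕ) :
    (a ^^^ c).size ≤ max (a ^^^ b).size (b ^^^ c).size := by
  have hac : (a ^^^ b) ^^^ (b ^^^ c) = a ^^^ c := by rw [xor_assoc, xor_cancel_left]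
  rw [← hac, Nat.size_le]
  exact Nat.xor_lt_two_pow
    (Nat.size_le.1 (le_max_left _ _)) (Nat.size_le.1 (le_max_right _ _))

theorem Nat.testBit_ne_of_size_xor_eq {a b t : ℕ} (h : (a ^^^ b).size = t + 1) :
    a.testBit t ≠ b.testBit t := by
  have htop : (a ^^^ b).testBit t = true :=
    Nat.testBit_of_two_pow_le_and_two_pow_add_one_gt (Nat.lt_size.1 (by omega))
      (h ▸ Nat.lt_size_self _)
  rw [Nat.testBit_xor] at htop
  intro heq
  simp [heq] at htop

theorem Fin.apply_ofNat_eq_iterate {m : ℕ} [NeZero m] {α : Type*} {f : Fin m → α} {φ : α → α}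
    (h : ∀ i, f (i + 1) = φ (f i)) (j : ℕ) : f (Fin.ofNat m j) = φ^[j] (f 0) := by
  induction j with
  | zero => simp
  | succ j ih =>
    have hsucc : Fin.ofNat m (j + 1) = Fin.ofNat m j + 1 := by
      ext; simp [Fin.val_add, Nat.add_mod]
    rw [hsucc, h, ih, Function.iterate_succ_apply']

theorem not_hasRainbowTriangle_of_le_max {V C : Type*} [LinearOrder C] {c : V → V → C}
    (hsymm : ∀ x y, c x y = c y x) (hmax : ∀ x y z, c x z ≤ max (c x y) (c y z)) :
    ¬ HasRainbowTriangle c := by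
  rintro ⟨a, b, d, -, -, -, hab_ad, hab_bd, had_bd⟩
  have h₁ := hmax a b d
  have h₂ := hsymm d b ▸ hmax a d b
  have h₃ := hsymm b a ▸ hmax b a d
  simp only [le_max_iff] at h₁ h₂ h₃
  rcases h₁ with h₁ | h₁ <;> rcases h₂ with h₂ | h₂ <;> rcases h₃ with h₃ | h₃ <;> order

theorem HasRainbowTriangle.map {V C D : Type*} {c : V → V → C} {f : C → D}
    (hf : Function.Injective f) : HasRainbowTriangle c → HasRainbowTriangle (fun x y ↦ f (c x y)) :=
  fun ⟨a, b, d, hab, had, hbd, h₁, h₂, h₃⟩ ↦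
    ⟨a, b, d, hab, had, hbd, hf.ne h₁, hf.ne h₂, hf.ne h₃⟩

theorem HasMonoCycleIn.map {V C D : Type*} {c : V → V → C} {m : ℕ} [NeZero m] {col : C}
    (f : C → D) : HasMonoCycleIn c m col → HasMonoCycleIn (fun x y ↦ f (c x y)) m (f col) :=
  fun ⟨v, hv, hcol⟩ ↦ ⟨v, hv, fun i ↦ congrArg f (hcol i)⟩

section MonoCycle

variable {V C : Type*} {c : V → V → C} {m : ℕ} [NeZero m] {col : C}

theorem not_hasMonoCycleIn_of_small_fibres {α : Type*} {s : ℕ} (p : V → α) (q : V → Fin s)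
    (hpq : ∀ x y, p x = p y → q x = q y → x = y) (hsm : s < m)
    (hcol : ∀ x y, c x y = col → p x = p y) : ¬ HasMonoCycleIn c m col := by
  rintro ⟨v, hv, hcyc⟩
  have hconst (i : Fin m) : p (v i) = p (v 0) := by
    simpa using Fin.apply_ofNat_eq_iterate (f := p ∘ v) (φ := id)
      (fun i ↦ (hcol _ _ (hcyc i)).symm) i.val
  have hinj : Function.Injective (q ∘ v) := fun i j hij ↦
    hv (hpq _ _ ((hconst i).trans (hconst j).symm) hij)
  have := Fintype.card_le_of_injective _ hinj
  simp only [Fintype.card_fin] at this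
  omega

theorem not_hasMonoCycleIn_of_flip (g : V → Bool) (hm : Odd m)
    (hcol : ∀ x y, c x y = col → g y = !g x) : ¬ HasMonoCycleIn c m col := by
  rintro ⟨v, -, hcyc⟩
  have := Fin.apply_ofNat_eq_iterate (f := g ∘ v) (φ := not) (fun i ↦ hcol _ _ (hcyc i)) m
  simp [Bool.involutive_not.iterate_odd hm] at this

end MonoCycle

/-- Colour `0` inside a fibre of `p`, and otherwise `1 +` the highest bit in which `p x` and `p y`
differ. -/
def highBitColoring {V : Type*} (p : V → ℕ) (x y : V) : ℕ := (p x ^^^ p y).size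

section HighBitColoring

variable {V : Type*} (p : V → ℕ)

theorem highBitColoring_comm (x y : V) : highBitColoring p x y = highBitColoring p y x := by
  rw [highBitColoring, highBitColoring, Nat.xor_comm]

theorem not_hasRainbowTriangle_highBitColoring : ¬ HasRainbowTriangle (highBitColoring p) :=
  not_hasRainbowTriangle_of_le_max (highBitColoring_comm p)
    (fun _ _ _ ↦ Nat.size_xor_le_max _ _ _)

theorem not_hasMonoCycle_highBitColoring {s m : ℕ} [NeZero m] (q : V → Fin s)
    (hpq : ∀ x y, p x = p y → q x = q y → x = y) (hsm : s < m) (hm : Odd m) :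
    ¬ HasMonoCycle (highBitColoring p) m := by
  rintro ⟨_ | t, hcyc⟩
  · refine not_hasMonoCycleIn_of_small_fibres p q hpq hsm (fun x y h ↦ ?_) hcyc
    exact xor_eq_zero_iff.1 (Nat.size_eq_zero.1 h)
  · refine not_hasMonoCycleIn_of_flip (fun x ↦ (p x).testBit t) hm (fun x y h ↦ ?_) hcyc
    exact Bool.eq_not_of_ne (Nat.testBit_ne_of_size_xor_eq h).symm

end HighBitColoring

theorem gallaiRamsey_oddCycle_lower_general (k n : ℕ) (hk : 2 ≤ k) :
    ∃ c : Fin (n * 2 ^ k) → Fin (n * 2 ^ k) → Fin k,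
      (∀ x y, c x y = c y x) ∧ ¬ HasRainbowTriangle c ∧
        ¬ HasMonoCycle c (2 * n + 1) := by
  obtain ⟨j, rfl⟩ : ∃ j, k = j + 1 := ⟨k - 1, by omega⟩
  let e : Fin (n * 2 ^ (j + 1)) ≃ Fin (2 ^ j) × Fin (2 * n) :=
    (finCongr (by ring)).trans finProdFinEquiv.symm
  let block (x : Fin (n * 2 ^ (j + 1))) : ℕ := (e x).1
  let c x y : Fin (j + 1) := ⟨highBitColoring block x y,
    Nat.lt_succ_of_le (Nat.size_le.2 (Nat.xor_lt_two_pow (e x).1.isLt (e y).1.isLt))⟩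
  refine ⟨c, fun x y ↦ Fin.ext (highBitColoring_comm block x y), ?_, ?_⟩
  · exact fun h ↦
      not_hasRainbowTriangle_highBitColoring block (h.map (f := Fin.val) Fin.val_injective)
  · rintro ⟨col, hcyc⟩
    refine not_hasMonoCycle_highBitColoring block (fun x ↦ (e x).2) (fun x y h₁ h₂ ↦ ?_)
      (by omega) (odd_two_mul_add_one n) ⟨_, hcyc.map Fin.val⟩
    exact e.injective (Prod.ext (Fin.ext h₁) h₂)

/-- For `k ≥ 2` and `n ≥ 2`, there is a `k`-edge-coloring of the complete graph
on `n·2^k` vertices with no rainbow triangle and no monochromatic `C_{2n+1}`;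
equivalently, `gr_k(K₃, C_{2n+1}) ≥ n·2^k + 1`. -/
theorem gallaiRamsey_oddCycle_lower (k n : ℕ) (hk : 2 ≤ k) (hn : 2 ≤ n) :
    ∃ c : Fin (n * 2 ^ k) → Fin (n * 2 ^ k) → Fin k,
      (∀ x y, c x y = c y x) ∧ ¬ HasRainbowTriangle c ∧
        ¬ HasMonoCycle c (2 * n + 1) :=
  gallaiRamsey_oddCycle_lower_general k n hk
end

section
/- For any edge-coloring c of a complete graph G on at least 2 vertices that contains no rainbow triangle, the vertex set V(G) can be partitioned into nonempty sets V_1, V_2, …, V_p with p > 1 such that, for each pair i ≠ j, all edges between V_i and V_j receive the same color under c, and at most two colors in total are used on edges joining distinct parts. -/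
/-!
Given a set `A` of vertices such that all edges between `A` and its complement have colors
in `{r, b}`, partition the vertices by connectivity through edges of colors outside `{r, b}`.
There are at least two classes, edges between different classes have colors in `{r, b}`, and
the color between two classes is constant: moving an endpoint along an edge of a third color
cannot change it without creating a rainbow triangle.

Such a set `A` exists by induction on the number of vertices. Remove a vertex `v`, take such a
set for the rest with colors `r, b`, and its classes as above. If the edges from some class to
`v` all have colors in `{r, b}`, that class works. Otherwise each class has an edge to `v` of a
third color; avoiding rainbow triangles, all these third colors equal a single `g`. Then either
the class of any `z` with `c v z ∈ {r, b}` works with colors `{c v z, g}`, or every edge at `v`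
has color `g` and `A = {v}` works.
-/

open Function

theorem Setoid.exists_fin_partition {V : Type*} [Finite V] (s : Setoid V) :
    ∃ (p : ℕ) (P : Fin p → Set V), (∀ i, (P i).Nonempty) ∧ (∀ x, ∃ i, x ∈ P i) ∧
      ∀ i j, ∀ x ∈ P i, ∀ y ∈ P j, (i = j ↔ s x y) := by
  let e := Finite.equivFin (Quotient s)
  refine ⟨_, fun i => {x | e ⟦x⟧ = i}, fun i => ?_, fun x => ⟨_, rfl⟩, ?_⟩
  · obtain ⟨x, hx⟩ := Quotient.exists_rep (e.symm i)
    exact ⟨x, by simp [hx]⟩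
  · rintro i j x rfl y rfl
    simp [Quotient.eq]

namespace Gallai

variable {V W C : Type*} {c : V → V → C} {S : Set C} {x x' y y' : V}

theorem not_hasRainbowTriangle_onFun (hrb : ¬ HasRainbowTriangle c) {f : W → V}
    (hf : Injective f) : ¬ HasRainbowTriangle (c on f) := by
  rintro ⟨a, b, d, hab, had, hbd, h⟩
  exact hrb ⟨f a, f b, f d, hf.ne hab, hf.ne had, hf.ne hbd, h⟩

theorem color_eq_of_ne_of_ne (hrb : ¬ HasRainbowTriangle c) {z : V} (hxy : x ≠ y) (hxz : x ≠ z)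
    (h₁ : c x y ≠ c x z) (h₂ : c x y ≠ c y z) : c x z = c y z := by
  by_contra h
  exact hrb ⟨x, y, z, hxy, hxz, fun hyz => h₁ (by rw [hyz]), h₁, h₂, h⟩

def Linked (c : V → V → C) (S : Set C) : V → V → Prop :=
  Relation.ReflTransGen fun x y => c x y ∉ S

theorem Linked.symm (hsym : ∀ x y, c x y = c y x) (h : Linked c S x y) : Linked c S y x := by
  induction h with
  | refl => exact .refl
  | tail _ hyz ih => exact .head (by rwa [hsym]) ih

theorem linked_equivalence (hsym : ∀ x y, c x y = c y x) : Equivalence (Linked c S) :=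
  ⟨fun _ => .refl, (·.symm hsym), .trans⟩

theorem mem_of_not_linked (h : ¬ Linked c S x y) : c x y ∈ S := by
  by_contra hxy
  exact h (.single hxy)

theorem ne_of_not_linked (h : ¬ Linked c S x y) : x ≠ y := by
  rintro rfl
  exact h .refl

theorem not_linked_or_not_linked (hsym : ∀ x y, c x y = c y x) (h : ¬ Linked c S x y) (z : V) :
    ¬ Linked c S z x ∨ ¬ Linked c S z y := by
  by_contra! hz
  exact h ((hz.1.symm hsym).trans hz.2)

theorem color_eq_of_linked_of_not_linked (hrb : ¬ HasRainbowTriangle c) (hxx' : Linked c S x x')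
    (hxy : ¬ Linked c S x y) : c x y = c x' y := by
  induction hxx' with
  | refl => rfl
  | @tail m m' hxm hmm' ih =>
    have hmy : ¬ Linked c S m y := fun h => hxy (hxm.trans h)
    have hm'y : ¬ Linked c S m' y := fun h => hxy ((hxm.tail hmm').trans h)
    rw [ih]
    by_cases hm : m = m'
    · rw [hm]
    exact color_eq_of_ne_of_ne hrb hm (ne_of_not_linked hmy)
      (fun h => hmm' (h ▸ mem_of_not_linked hmy)) (fun h => hmm' (h ▸ mem_of_not_linked hm'y))

theorem color_eq_of_linked_of_linked (hsym : ∀ x y, c x y = c y x) (hrb : ¬ HasRainbowTriangle c)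
    (hxx' : Linked c S x x') (hyy' : Linked c S y y') (hxy : ¬ Linked c S x y) :
    c x y = c x' y' :=
  calc c x y = c x' y := color_eq_of_linked_of_not_linked hrb hxx' hxy
    _ = c y x' := hsym _ _
    _ = c y' x' :=
      color_eq_of_linked_of_not_linked hrb hyy' fun h => hxy (hxx'.trans (h.symm hsym))
    _ = c x' y' := hsym _ _

def HasTwoColoredCut (c : V → V → C) : Prop :=
  ∃ (r b : C) (A : Set V), A.Nonempty ∧ Aᶜ.Nonempty ∧
    ∀ x ∈ A, ∀ y ∉ A, c x y ∈ ({r, b} : Set C)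

theorem exists_not_linked_of_hasTwoColoredCut (h : HasTwoColoredCut c) :
    ∃ (r b : C) (x y : V), ¬ Linked c {r, b} x y := by
  obtain ⟨r, b, A, ⟨x, hx⟩, ⟨y, hy⟩, hA⟩ := h
  have hclosed : ∀ z, Linked c {r, b} x z → z ∈ A := fun z hxz => by
    induction hxz with
    | refl => exact hx
    | @tail z z' _ hzz' ih => exact by_contra fun hz' => hzz' (hA z ih z' hz')
  exact ⟨r, b, x, y, fun hxy => hy (hclosed y hxy)⟩

theorem HasTwoColoredCut.of_onFun_equiv (e : W ≃ V)
    (h : HasTwoColoredCut (c on e)) : HasTwoColoredCut c := by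
  obtain ⟨r, b, A, ⟨x, hx⟩, ⟨y, hy⟩, hA⟩ := h
  refine ⟨r, b, e.symm ⁻¹' A, ⟨e x, by simpa⟩, ⟨e y, by simpa⟩, fun x hx y hy => ?_⟩
  simpa [onFun] using hA _ hx _ hy

theorem hasTwoColoredCut_of_forall_color_eq {v y₀ : V} (hy₀ : y₀ ≠ v) {g : C}
    (hv : ∀ y ≠ v, c v y = g) : HasTwoColoredCut c := by
  refine ⟨g, g, {v}, ⟨v, rfl⟩, ⟨y₀, hy₀⟩, ?_⟩
  rintro x rfl y hy
  exact Or.inl (hv y hy)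

section Option

-- `none` is the vertex added in the inductive step.
variable {c : Option W → Option W → C}

theorem hasTwoColoredCut_of_class (hsym : ∀ x y, c x y = c y x) (u : W) {r b : C}
    (hnone : ∀ w, Linked (c on some) S u w → c none w ∈ ({r, b} : Set C))
    (hout : ∀ w w', Linked (c on some) S u w →
      ¬ Linked (c on some) S u w' → c w w' ∈ ({r, b} : Set C)) :
    HasTwoColoredCut c := by
  refine ⟨r, b, some '' {w | Linked (c on some) S u w}, ⟨u, u, .refl, rfl⟩,
    ⟨none, by simp⟩, ?_⟩
  rintro _ ⟨w, huw, rfl⟩ (_ | w') hw'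
  · rw [hsym]
    exact hnone w huw
  · exact hout w w' huw fun h => hw' ⟨w', h, rfl⟩

theorem color_none_eq_of_not_linked (hsym : ∀ x y, c x y = c y x) (hrb : ¬ HasRainbowTriangle c)
    {w w' : W} (h : ¬ Linked (c on some) S w w') (hw : c none w ∉ S)
    (hw' : c none w' ∉ S) : c none w = c none w' := by
  have hS := mem_of_not_linked h
  rw [hsym none, hsym none]
  exact color_eq_of_ne_of_ne hrb (by simpa using ne_of_not_linked h) (by simp)
    (fun h => hw (hsym none w ▸ h ▸ hS)) (fun h => hw' (hsym none w' ▸ h ▸ hS))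

theorem hasTwoColoredCut_of_color_none_mem (hsym : ∀ x y, c x y = c y x)
    (hrb : ¬ HasRainbowTriangle c)
    (hclass : ∀ u : W, ∃ w, Linked (c on some) S u w ∧ c none w ∉ S) {z t : W}
    (hzt : ¬ Linked (c on some) S z t) (hz : c none z ∈ S) : HasTwoColoredCut c := by
  have hsym' : ∀ x y, (c on some) x y = (c on some) y x := fun x y => hsym x y
  have hrb' := not_hasRainbowTriangle_onFun hrb (Option.some_injective W)
  obtain ⟨w', htw', hw'⟩ := hclass t
  have hzw' : ¬ Linked (c on some) S z w' := fun h => hzt (h.trans (htw'.symm hsym'))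
  have hacross : ∀ y, ¬ Linked (c on some) S z y → c z y = c none z := fun y hzy => by
    obtain ⟨wy, hywy, hwy⟩ := hclass y
    have hwyz : ¬ Linked (c on some) S wy z :=
      fun h => hzy ((h.symm hsym').trans (hywy.symm hsym'))
    have hyz : c y z = c wy z :=
      color_eq_of_linked_of_not_linked (c := c on some) hrb' hywy fun h => hzy (h.symm hsym')
    have hnone : c none wy ≠ c none z := fun h => hwy (h ▸ hz)
    have hwyz' : c none wy ≠ c wy z :=
      fun h => hwy (h ▸ mem_of_not_linked (c := c on some) hwyz)
    rw [hsym, hyz, color_eq_of_ne_of_ne hrb (by simp) (by simp) hnone hwyz']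
  have hout : ∀ w w', Linked (c on some) S z w → ¬ Linked (c on some) S z w' →
      c w w' = c none z := fun w w' hzw hzw' =>
    (color_eq_of_linked_of_not_linked hrb' hzw hzw').symm.trans (hacross w' hzw')
  refine hasTwoColoredCut_of_class hsym z (b := c none w') (fun w hzw => ?_)
    fun w w' hzw hzw' => Or.inl (hout w w' hzw hzw')
  by_cases hw : c none w ∈ S
  · have hw'w : c w' w = c none z := by rw [hsym]; exact hout w w' hzw hzw'
    have hnone : c none w' ≠ c none w := fun h => hw' (h ▸ hw)
    have hw'w' : c none w' ≠ c w' w := fun h => hw' (h ▸ hw'w ▸ hz)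
    exact Or.inl ((color_eq_of_ne_of_ne hrb (by simp) (by simp) hnone hw'w').trans hw'w)
  · exact Or.inr (color_none_eq_of_not_linked hsym hrb (fun h => hzw' (hzw.trans h)) hw hw')

theorem HasTwoColoredCut.of_onFun_some (hsym : ∀ x y, c x y = c y x)
    (hrb : ¬ HasRainbowTriangle c)
    (h : HasTwoColoredCut (c on some)) : HasTwoColoredCut c := by
  obtain ⟨r, b, x₀, y₀, h₀⟩ := exists_not_linked_of_hasTwoColoredCut h
  by_cases hclass : ∃ u, ∀ w, Linked (c on some) {r, b} u w → c none w ∈ ({r, b} : Set C)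
  · obtain ⟨u, hu⟩ := hclass
    exact hasTwoColoredCut_of_class hsym u hu fun w w' huw huw' =>
      mem_of_not_linked (c := c on some) fun h => huw' (huw.trans h)
  push Not at hclass
  by_cases hz : ∃ z : W, c none z ∈ ({r, b} : Set C)
  · obtain ⟨z, hz⟩ := hz
    obtain ⟨t, ht⟩ : ∃ t, ¬ Linked (c on some) {r, b} z t :=
      (not_linked_or_not_linked (c := c on some) (fun x y => hsym x y) h₀ z).elim
        (⟨_, ·⟩) (⟨_, ·⟩)
    exact hasTwoColoredCut_of_color_none_mem hsym hrb hclass ht hz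
  push Not at hz
  have hx₀y₀ := color_none_eq_of_not_linked hsym hrb h₀ (hz x₀) (hz y₀)
  refine hasTwoColoredCut_of_forall_color_eq (v := none) (y₀ := some x₀) (g := c none x₀)
    (by simp) fun y hy => ?_
  obtain ⟨w, rfl⟩ := Option.ne_none_iff_exists'.mp hy
  by_cases hx₀w : Linked (c on some) {r, b} x₀ w
  · have hwy₀ : ¬ Linked (c on some) {r, b} w y₀ := fun h => h₀ (hx₀w.trans h)
    rw [color_none_eq_of_not_linked hsym hrb hwy₀ (hz w) (hz y₀), hx₀y₀]
  · exact (color_none_eq_of_not_linked hsym hrb hx₀w (hz x₀) (hz w)).symm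

end Option

theorem hasTwoColoredCut [Finite V] [Nontrivial V] (hsym : ∀ x y, c x y = c y x)
    (hrb : ¬ HasRainbowTriangle c) : HasTwoColoredCut c := by
  revert ‹Nontrivial V›
  induction V using Finite.induction_empty_option with
  | of_equiv e ih =>
    intro _
    have := e.nontrivial
    exact .of_onFun_equiv e
      (ih (fun x y => hsym _ _) (not_hasRainbowTriangle_onFun hrb e.injective))
  | h_empty => exact (not_nontrivial PEmpty ‹_›).elim
  | @h_option W _ ih =>
    intro hV
    rcases subsingleton_or_nontrivial W with _ | _
    · obtain ⟨u⟩ : Nonempty W := by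
        by_contra! hempty
        exact not_nontrivial (Option W) hV
      refine hasTwoColoredCut_of_forall_color_eq (v := none) (y₀ := some u) (g := c none u)
        (by simp) fun y hy => ?_
      obtain ⟨w, rfl⟩ := Option.ne_none_iff_exists'.mp hy
      rw [Subsingleton.elim w u]
    · exact .of_onFun_some hsym hrb
        (ih (fun x y => hsym _ _) (not_hasRainbowTriangle_onFun hrb (Option.some_injective W)))

end Gallai

/-- Gallai's structure theorem: any rainbow-triangle-free edge-coloring of a
complete graph on at least two vertices admits a nontrivial partition into
nonempty parts such that edges between any fixed pair of parts are
monochromatic, and at most two colors appear between parts in total. -/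
theorem gallai_partition {V C : Type*} [Fintype V] (hV : 2 ≤ Fintype.card V)
    (c : V → V → C) (hsym : ∀ x y, c x y = c y x)
    (hrb : ¬ HasRainbowTriangle c) :
    ∃ p : ℕ, 1 < p ∧ ∃ P : Fin p → Set V,
      (∀ i, (P i).Nonempty) ∧
      (∀ i j, i ≠ j → Disjoint (P i) (P j)) ∧
      (⋃ i, P i) = Set.univ ∧
      (∀ i j, i ≠ j → ∀ x ∈ P i, ∀ y ∈ P j, ∀ x' ∈ P i, ∀ y' ∈ P j,
        c x y = c x' y') ∧
      ∃ c₁ c₂ : C, ∀ i j, i ≠ j → ∀ x ∈ P i, ∀ y ∈ P j,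
        c x y = c₁ ∨ c x y = c₂ := by
  have : Nontrivial V := Fintype.one_lt_card_iff_nontrivial.mp hV
  obtain ⟨r, b, x₀, y₀, h₀⟩ :=
    Gallai.exists_not_linked_of_hasTwoColoredCut (Gallai.hasTwoColoredCut hsym hrb)
  obtain ⟨p, P, hne, hcover, hP⟩ :=
    Setoid.exists_fin_partition ⟨_, Gallai.linked_equivalence (S := {r, b}) hsym⟩
  obtain ⟨i₀, hi₀⟩ := hcover x₀
  obtain ⟨j₀, hj₀⟩ := hcover y₀
  have hij₀ : i₀ ≠ j₀ := fun h => h₀ ((hP _ _ _ hi₀ _ hj₀).mp h)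
  refine ⟨p, ?_, P, hne, ?_, ?_, ?_, r, b, ?_⟩
  · exact Fin.nontrivial_iff_two_le.mp ⟨i₀, j₀, hij₀⟩
  · intro i j hij
    exact Set.disjoint_left.mpr fun x hi hj => hij ((hP i j x hi x hj).mpr .refl)
  · exact Set.eq_univ_of_forall fun x => Set.mem_iUnion.mpr (hcover x)
  · intro i j hij x hx y hy x' hx' y' hy'
    exact Gallai.color_eq_of_linked_of_linked hsym hrb ((hP i i x hx x' hx').mp rfl)
      ((hP j j y hy y' hy').mp rfl) fun h => hij ((hP i j x hx y hy).mpr h)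
  · intro i j hij x hx y hy
    exact Gallai.mem_of_not_linked (S := {r, b}) fun h => hij ((hP i j x hx y hy).mpr h)
end

section
/- For every integer k ≥ 1, the Gallai-Ramsey number gr_k(K_3, K_3) equals 5^{k/2} + 1 if k is even, and equals 2·5^{(k-1)/2} + 1 if k is odd; that is, this value is the least positive integer n such that every k-edge-coloring of the complete graph K_n contains a rainbow triangle or a monochromatic triangle. -/
open Finset

namespace GallaiColoring

variable {V C : Type*}

def GallaiOn (s : Finset V) (c : V → V → C) : Prop :=
  ∀ ⦃x⦄, x ∈ s → ∀ ⦃y⦄, y ∈ s → ∀ ⦃z⦄, z ∈ s → x ≠ y → x ≠ z → y ≠ z →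
    c x y = c x z ∨ c x y = c y z ∨ c x z = c y z

def MonoTriangleFreeOn (s : Finset V) (c : V → V → C) : Prop :=
  ∀ ⦃x⦄, x ∈ s → ∀ ⦃y⦄, y ∈ s → ∀ ⦃z⦄, z ∈ s → x ≠ y → x ≠ z → y ≠ z →
    ∀ col, ¬ (c x y = col ∧ c x z = col ∧ c y z = col)

def TwoColoredOn (s : Finset V) (c : V → V → C) (a b : C) : Prop :=
  ∀ x ∈ s, ∀ y ∈ s, x ≠ y → c x y = a ∨ c x y = b

variable {s t : Finset V} {c : V → V → C} {col : C} {u v w x y z : V}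

theorem GallaiOn.mono (h : GallaiOn t c) (hst : s ⊆ t) : GallaiOn s c :=
  fun _ hx _ hy _ hz => h (hst hx) (hst hy) (hst hz)

theorem MonoTriangleFreeOn.mono (h : MonoTriangleFreeOn t c) (hst : s ⊆ t) :
    MonoTriangleFreeOn s c :=
  fun _ hx _ hy _ hz => h (hst hx) (hst hy) (hst hz)

theorem exists_edge_of_not_twoColoredOn {a b : C} (h : ¬ TwoColoredOn s c a b) :
    ∃ x ∈ s, ∃ y ∈ s, x ≠ y ∧ c x y ≠ a ∧ c x y ≠ b := by
  simpa [TwoColoredOn] using h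

def ColorStep (s : Finset V) (c : V → V → C) (col : C) (x y : V) : Prop :=
  x ∈ s ∧ y ∈ s ∧ c x y = col

abbrev ColorReach (s : Finset V) (c : V → V → C) (col : C) : V → V → Prop :=
  Relation.ReflTransGen (ColorStep s c col)

def HasDisconnectedColor (s : Finset V) (c : V → V → C) : Prop :=
  ∃ col, ∃ x ∈ s, ∃ y ∈ s, ∃ z ∈ s, x ≠ y ∧ c x y = col ∧ ¬ ColorReach s c col x z

theorem ColorReach.symm (hc : ∀ x y, c x y = c y x) (h : ColorReach s c col x y) :
    ColorReach s c col y x := by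
  induction h with
  | refl => rfl
  | tail _ hstep ih => exact ih.head ⟨hstep.2.1, hstep.1, (hc _ _).trans hstep.2.2⟩

theorem ColorReach.ne_of_isolated (hv : ∀ b ∈ s, b ≠ v → c b v ≠ col) (hx : x ≠ v)
    (h : ColorReach s c col x y) : y ≠ v := by
  induction h with
  | refl => exact hx
  | tail _ hstep ih => rintro rfl; exact hv _ hstep.1 ih hstep.2.2

theorem GallaiOn.color_eq_of_colorReach (hc : ∀ x y, c x y = c y x) (hG : GallaiOn s c)
    (hz : z ∈ s) (hxz : ¬ ColorReach s c col x z) (h : ColorReach s c col x y) :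
    c z y = c z x := by
  induction h with
  | refl => rfl
  | @tail b y hxb hby ih =>
    obtain ⟨hb, hy, hcol⟩ := hby
    have hxy : ColorReach s c col x y := hxb.tail ⟨hb, hy, hcol⟩
    have hzb : c z b ≠ col := fun h => hxz (hxb.tail ⟨hb, hz, (hc _ _).trans h⟩)
    have hzy : c z y ≠ col := fun h => hxz (hxy.tail ⟨hy, hz, (hc _ _).trans h⟩)
    rw [← ih]
    by_cases hby : b = y
    · rw [hby]
    rcases hG hz hb hy (by rintro rfl; exact hxz hxb) (by rintro rfl; exact hxz hxy) hby
      with h | h | h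
    · exact h.symm
    · exact absurd (h.trans hcol) hzb
    · exact absurd (h.trans hcol) hzy

def IsModule (s M : Finset V) (c : V → V → C) : Prop :=
  ∀ z ∈ s, z ∉ M → ∀ x ∈ M, ∀ y ∈ M, c z x = c z y

theorem GallaiOn.isModule_colorComponent (hc : ∀ x y, c x y = c y x) (hG : GallaiOn s c)
    (col : C) (x : V) [DecidablePred (ColorReach s c col x)] :
    IsModule s (s.filter (ColorReach s c col x)) c := by
  intro z hz hzK u hu w hw
  have hxz : ¬ ColorReach s c col x z := fun h => hzK (mem_filter.2 ⟨hz, h⟩)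
  rw [hG.color_eq_of_colorReach hc hz hxz (mem_filter.1 hu).2,
    hG.color_eq_of_colorReach hc hz hxz (mem_filter.1 hw).2]

/-- The parts are the fibres of `P` over the set `R` of representatives, on which `c` is the
reduced colouring. -/
structure IsGallaiPartition (s R : Finset V) (c : V → V → C) (P : V → V) (a b : C) : Prop where
  subset : R ⊆ s
  one_lt_card : 1 < R.card
  rep_mem : ∀ x ∈ s, P x ∈ R
  rep_self : ∀ r ∈ R, P r = r
  color_eq : ∀ x ∈ s, ∀ y ∈ s, P x ≠ P y → c x y = c (P x) (P y)
  twoColoredOn : TwoColoredOn R c a b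

theorem IsGallaiPartition.color_eq_rep {R : Finset V} {P : V → V} {a b : C}
    (hP : IsGallaiPartition s R c P a b) (hx : x ∈ s)
    (hw : w ∈ R) (hxw : P x ≠ w) : c x w = c (P x) w := by
  have := hP.color_eq x hx w (hP.subset hw) (by rwa [hP.rep_self w hw])
  rwa [hP.rep_self w hw] at this

section Erase

variable [DecidableEq V]

theorem ColorReach.exists_step_erase (h : ColorReach s c col v u) (hu : u ≠ v) :
    ∃ w ∈ s.erase v, c v w = col ∧ ColorReach (s.erase v) c col w u := by
  induction h with
  | refl => exact absurd rfl hu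
  | @tail b u _ hbu ih =>
    obtain ⟨hb, hu', hcol⟩ := hbu
    by_cases hbv : b = v
    · subst hbv
      exact ⟨u, mem_erase.2 ⟨hu, hu'⟩, hcol, .refl⟩
    · obtain ⟨w, hw, hvw, hwb⟩ := ih hbv
      exact ⟨w, hw, hvw, hwb.tail ⟨mem_erase.2 ⟨hbv, hb⟩, mem_erase.2 ⟨hu, hu'⟩, hcol⟩⟩

theorem hasDisconnectedColor_of_twoColoredOn_erase (hc : ∀ x y, c x y = c y x) (hv : v ∈ s)
    {a b : C} (h2 : TwoColoredOn (s.erase v) c a b) (h3 : ∀ a b, ¬ TwoColoredOn s c a b) :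
    HasDisconnectedColor s c := by
  have hoff : ∀ ⦃p q⦄, p ∈ s → q ∈ s → p ≠ q → p ≠ v → q ≠ v → c p q = a ∨ c p q = b :=
    fun p q hp hq hpq hpv hqv => h2 p (mem_erase.2 ⟨hpv, hp⟩) q (mem_erase.2 ⟨hqv, hq⟩) hpq
  obtain ⟨u, hu, huv, hua, hub⟩ : ∃ u ∈ s, u ≠ v ∧ c v u ≠ a ∧ c v u ≠ b := by
    obtain ⟨p, hp, q, hq, hpq, hpa, hpb⟩ := exists_edge_of_not_twoColoredOn (h3 a b)
    by_cases hpv : p = v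
    · subst hpv; exact ⟨q, hq, hpq.symm, hpa, hpb⟩
    by_cases hqv : q = v
    · subst hqv; exact ⟨p, hp, hpv, hc p q ▸ hpa, hc p q ▸ hpb⟩
    exact absurd (hoff hp hq hpq hpv hqv) (not_or.2 ⟨hpa, hpb⟩)
  by_cases hall : ∀ u' ∈ s, u' ≠ v → c v u' = c v u
  · obtain ⟨p, hp, q, hq, hpq, hpb, hpd⟩ := exists_edge_of_not_twoColoredOn (h3 b (c v u))
    have hpv : p ≠ v := by rintro rfl; exact hpd (hall q hq hpq.symm)
    have hqv : q ≠ v := by rintro rfl; exact hpd (hc p _ ▸ hall p hp hpq)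
    refine ⟨a, p, hp, q, hq, v, hv, hpq, (hoff hp hq hpq hpv hqv).resolve_right hpb,
      fun h => h.ne_of_isolated (fun b' hb' hb'v => ?_) hpv rfl⟩
    rw [hc, hall b' hb' hb'v]
    exact hua
  · push Not at hall
    obtain ⟨u', hu', hu'v, hu'u⟩ := hall
    refine ⟨c v u, v, hv, u, hu, u', hu', huv.symm, rfl,
      fun h => h.ne_of_isolated (fun b' hb' hb'u' => ?_) (fun h => hu'v h.symm) rfl⟩
    by_cases hb'v : b' = v
    · subst hb'v; exact hu'u
    · rcases hoff hb' hu' hb'u' hb'v hu'v with h | h <;> rw [h]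
      exacts [hua.symm, hub.symm]

section ConnectedThroughVertex

variable (hc : ∀ x y, c x y = c y x) (hG : GallaiOn s c) (hv : v ∈ s)
  (hconn : ∀ u ∈ s, ColorReach s c col v u)
include hc hG hv hconn

theorem color_eq_of_not_colorReach_erase (hu : u ∈ s.erase v) (hvu : c v u ≠ col)
    (hw : w ∈ s.erase v) (huw : ¬ ColorReach (s.erase v) c col u w) : c u w = c v u := by
  obtain ⟨w', hw', hvw', hw'w⟩ := (hconn w (mem_of_mem_erase hw)).exists_step_erase
    (ne_of_mem_erase hw)
  have huw' : ¬ ColorReach (s.erase v) c col u w' := fun h => huw (h.trans hw'w)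
  have hcuw' : c u w' ≠ col := fun h => huw' (.single ⟨hu, hw', h⟩)
  have h1 : c u w' = c v u := by
    rcases hG hv (mem_of_mem_erase hu) (mem_of_mem_erase hw') (ne_of_mem_erase hu).symm
      (ne_of_mem_erase hw').symm (by rintro rfl; exact huw' .refl) with h | h | h
    · exact absurd (h.trans hvw') hvu
    · exact h.symm
    · exact absurd (h.symm.trans hvw') hcuw'
  rw [← h1]
  exact (hG.mono (erase_subset v s)).color_eq_of_colorReach hc hu (fun h => huw' (h.symm hc))
    hw'w

theorem color_eq_of_ne_color_erase
    (hsep : ∀ u ∈ s.erase v, ∃ w ∈ s.erase v, ¬ ColorReach (s.erase v) c col u w)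
    (hu : u ∈ s.erase v) (hw : w ∈ s.erase v) (hvu : c v u ≠ col) (hvw : c v w ≠ col) :
    c v u = c v w := by
  by_cases huw : ColorReach (s.erase v) c col u w
  · obtain ⟨x, hx, hux⟩ := hsep u hu
    have hwx : ¬ ColorReach (s.erase v) c col w x := fun h => hux (huw.trans h)
    calc c v u = c u x := (color_eq_of_not_colorReach_erase hc hG hv hconn hu hvu hx hux).symm
      _ = c x u := hc u x
      _ = c x w := ((hG.mono (erase_subset v s)).color_eq_of_colorReach hc hx hux huw).symm
      _ = c w x := hc x w
      _ = c v w := color_eq_of_not_colorReach_erase hc hG hv hconn hw hvw hx hwx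
  · calc c v u = c u w := (color_eq_of_not_colorReach_erase hc hG hv hconn hu hvu hw huw).symm
      _ = c w u := hc u w
      _ = c v w := color_eq_of_not_colorReach_erase hc hG hv hconn hw hvw hu
          fun h => huw (h.symm hc)

end ConnectedThroughVertex

theorem hasDisconnectedColor_of_erase (hc : ∀ x y, c x y = c y x) (hG : GallaiOn s c)
    (hv : v ∈ s) (h3 : ∀ a b, ¬ TwoColoredOn (s.erase v) c a b)
    (hd : HasDisconnectedColor (s.erase v) c) : HasDisconnectedColor s c := by
  obtain ⟨col, x, hx, y, hy, z, hz, hxy, hcol, hxz⟩ := hd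
  by_cases hconn : ∀ u ∈ s, ColorReach s c col x u
  swap
  · push Not at hconn
    obtain ⟨u, hu, hxu⟩ := hconn
    exact ⟨col, x, mem_of_mem_erase hx, y, mem_of_mem_erase hy, u, hu, hxy, hcol, hxu⟩
  have hvconn : ∀ u ∈ s, ColorReach s c col v u :=
    fun u hu => ((hconn v hv).symm hc).trans (hconn u hu)
  have hsep : ∀ u ∈ s.erase v, ∃ w ∈ s.erase v, ¬ ColorReach (s.erase v) c col u w := by
    intro u _
    by_cases hxu : ColorReach (s.erase v) c col x u
    · exact ⟨z, hz, fun h => hxz (hxu.trans h)⟩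
    · exact ⟨x, hx, fun h => hxu (h.symm hc)⟩
  -- `v` joins the `col`-components, so its edges of other colours share one colour `d`
  obtain ⟨d, hd⟩ : ∃ d, ∀ u ∈ s.erase v, c v u = col ∨ c v u = d := by
    by_cases h : ∃ u ∈ s.erase v, c v u ≠ col
    · obtain ⟨u, hu, hvu⟩ := h
      exact ⟨c v u, fun w hw => or_iff_not_imp_left.2 fun hvw =>
        (color_eq_of_ne_color_erase hc hG hv hvconn hsep hu hw hvu hvw).symm⟩
    · push Not at h
      exact ⟨col, fun u hu => Or.inl (h u hu)⟩
  obtain ⟨p, hp, q, hq, hpq, hpc, hpd⟩ := exists_edge_of_not_twoColoredOn (h3 col d)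
  refine ⟨c p q, p, mem_of_mem_erase hp, q, mem_of_mem_erase hq, v, hv, hpq, rfl,
    fun h => h.ne_of_isolated (fun b hb hbv => ?_) (ne_of_mem_erase hp) rfl⟩
  rw [hc]
  rcases hd b (mem_erase.2 ⟨hbv, hb⟩) with h | h <;> rw [h]
  exacts [hpc.symm, hpd.symm]

theorem IsGallaiPartition.of_contract (hc : ∀ x y, c x y = c y x) {M R : Finset V} {P : V → V}
    {a b : C} {x₀ : V} (hMs : M ⊆ s) (hx₀ : x₀ ∈ M) (hM : IsModule s M c)
    (h : IsGallaiPartition (insert x₀ (s \ M)) R c P a b) :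
    IsGallaiPartition s R c (fun u => P (if u ∈ M then x₀ else u)) a b := by
  have hproj : ∀ u ∈ s, (if u ∈ M then x₀ else u) ∈ insert x₀ (s \ M) := by
    intro u hu
    split_ifs with huM
    · exact mem_insert_self _ _
    · exact mem_insert_of_mem (mem_sdiff.2 ⟨hu, huM⟩)
  have hfix : ∀ u ∈ insert x₀ (s \ M), (if u ∈ M then x₀ else u) = u := by
    intro u hu
    split_ifs with huM
    · rcases mem_insert.1 hu with rfl | hu
      · rfl
      · exact absurd huM (mem_sdiff.1 hu).2
    · rfl
  refine ⟨h.subset.trans (insert_subset (hMs hx₀) sdiff_subset), h.one_lt_card,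
    fun u hu => h.rep_mem _ (hproj u hu), fun r hr => ?_, fun u hu w hw hne => ?_,
    h.twoColoredOn⟩
  · simp only [hfix r (h.subset hr), h.rep_self r hr]
  · rw [← h.color_eq _ (hproj u hu) _ (hproj w hw) hne]
    split_ifs at hne ⊢ with huM hwM hwM
    · exact absurd rfl hne
    · rw [hc, hM w hw hwM u huM x₀ hx₀, hc]
    · exact hM u hu huM w hwM x₀ hx₀
    · rfl

end Erase

theorem GallaiOn.hasDisconnectedColor [Nonempty C] (hc : ∀ x y, c x y = c y x)
    (hG : GallaiOn s c) (h3 : ∀ a b, ¬ TwoColoredOn s c a b) : HasDisconnectedColor s c := by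
  classical
  induction s using Finset.strongInduction with
  | H s ih =>
  obtain ⟨v, hv, -⟩ := exists_edge_of_not_twoColoredOn
    (h3 (Classical.arbitrary C) (Classical.arbitrary C))
  by_cases h2 : ∃ a b, TwoColoredOn (s.erase v) c a b
  · obtain ⟨a, b, h2⟩ := h2
    exact hasDisconnectedColor_of_twoColoredOn_erase hc hv h2 h3
  · push Not at h2
    exact hasDisconnectedColor_of_erase hc hG hv h2
      (ih _ (erase_ssubset hv) (hG.mono (erase_subset v s)) h2)

theorem GallaiOn.exists_isGallaiPartition (hc : ∀ x y, c x y = c y x) (hG : GallaiOn s c)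
    (hs : 1 < s.card) : ∃ R P, ∃ a b : C, IsGallaiPartition s R c P a b := by
  classical
  induction s using Finset.strongInduction with
  | H s ih =>
  by_cases h2 : ∃ a b, TwoColoredOn s c a b
  · obtain ⟨a, b, h2⟩ := h2
    exact ⟨s, id, a, b, subset_rfl, hs, fun x hx => hx, fun _ _ => rfl, fun _ _ _ _ _ => rfl, h2⟩
  push Not at h2
  obtain ⟨x₀, -⟩ := s.card_pos.1 (by omega)
  have : Nonempty C := ⟨c x₀ x₀⟩
  obtain ⟨col, x, hx, y, hy, z, hz, hxy, hcol, hxz⟩ := hG.hasDisconnectedColor hc h2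
  set K := s.filter (ColorReach s c col x)
  have hxK : x ∈ K := mem_filter.2 ⟨hx, .refl⟩
  have hyK : y ∈ K := mem_filter.2 ⟨hy, .single ⟨hx, hy, hcol⟩⟩
  have hzK : z ∉ K := fun h => hxz (mem_filter.1 h).2
  have hsub : insert x (s \ K) ⊂ s := by
    refine (ssubset_iff_of_subset (insert_subset hx sdiff_subset)).2 ⟨y, hy, ?_⟩
    rw [mem_insert, mem_sdiff, not_or, not_and_not_right]
    exact ⟨hxy.symm, fun _ => hyK⟩
  have hcard : 1 < (insert x (s \ K)).card :=
    one_lt_card.2 ⟨x, mem_insert_self _ _, z, mem_insert_of_mem (mem_sdiff.2 ⟨hz, hzK⟩),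
      fun h => hzK (h ▸ hxK)⟩
  obtain ⟨R, P, a, b, hP⟩ := ih _ hsub (hG.mono hsub.subset) hcard
  exact ⟨R, _, a, b, hP.of_contract hc (filter_subset _ _) hxK
    (hG.isModule_colorComponent hc col x)⟩

/-- The largest order of a Gallai colouring with `t` colours and no monochromatic triangle. -/
def gallaiBound : ℕ → ℕ
  | 0 => 1
  | 1 => 2
  | t + 2 => 5 * gallaiBound t

theorem gallaiBound_add_two (t : ℕ) : gallaiBound (t + 2) = 5 * gallaiBound t := rfl

theorem gallaiBound_two_mul (j : ℕ) : gallaiBound (2 * j) = 5 ^ j := by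
  induction j with
  | zero => rfl
  | succ j ih => rw [Nat.mul_succ, gallaiBound_add_two, ih, pow_succ, mul_comm]

theorem gallaiBound_two_mul_add_one (j : ℕ) : gallaiBound (2 * j + 1) = 2 * 5 ^ j := by
  induction j with
  | zero => rfl
  | succ j ih =>
    rw [Nat.mul_succ, show 2 * j + 2 + 1 = 2 * j + 1 + 2 by ring, gallaiBound_add_two, ih,
      pow_succ]
    ring

theorem gallaiBound_eq (k : ℕ) :
    gallaiBound k = if Even k then 5 ^ (k / 2) else 2 * 5 ^ ((k - 1) / 2) := by
  obtain ⟨j, rfl | rfl⟩ := Nat.even_or_odd' k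
  · simp [gallaiBound_two_mul]
  · simp [gallaiBound_two_mul_add_one, parity_simps]

theorem one_le_gallaiBound : ∀ t, 1 ≤ gallaiBound t
  | 0 | 1 => by decide
  | t + 2 => by rw [gallaiBound_add_two]; have := one_le_gallaiBound t; omega

theorem two_mul_gallaiBound_le : ∀ t, 2 * gallaiBound t ≤ gallaiBound (t + 1)
  | 0 | 1 => by decide
  | t + 2 => by
    show 2 * (5 * gallaiBound t) ≤ 5 * gallaiBound (t + 1)
    have := two_mul_gallaiBound_le t; omega

theorem gallaiBound_succ_le : ∀ t, gallaiBound (t + 1) ≤ 3 * gallaiBound t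
  | 0 | 1 => by decide
  | t + 2 => by
    show 5 * gallaiBound (t + 1) ≤ 3 * (5 * gallaiBound t)
    have := gallaiBound_succ_le t; omega

theorem gallaiBound_succ_add_two_mul_le (t : ℕ) :
    gallaiBound (t + 1) + 2 * gallaiBound t ≤ gallaiBound (t + 2) := by
  rw [gallaiBound_add_two]; have := gallaiBound_succ_le t; omega

theorem gallaiBound_mono : Monotone gallaiBound :=
  monotone_nat_of_le_succ fun t => (Nat.le_mul_of_pos_left _ two_pos).trans
    (two_mul_gallaiBound_le t)

section Reduced

variable [DecidableEq V] {R : Finset V} {a b : C}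

theorem MonoTriangleFreeOn.card_le_two_of_forall_color_eq (hM : MonoTriangleFreeOn R c)
    (h2 : TwoColoredOn R c a b) (hw : w ∈ R) {F : Finset V} (hF : F ⊆ R.erase w) {γ : C}
    (hγ : ∀ y ∈ F, c w y = γ) : F.card ≤ 2 := by
  by_contra! h3
  obtain ⟨y₁, h₁, y₂, h₂, y₃, h₃, h₁₂, h₁₃, h₂₃⟩ := two_lt_card.1 h3
  have hR : ∀ y ∈ F, y ∈ R ∧ w ≠ y :=
    fun y hy => ⟨mem_of_mem_erase (hF hy), (ne_of_mem_erase (hF hy)).symm⟩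
  have hedge : ∀ y ∈ F, ∀ y' ∈ F, y ≠ y' → (c y y' = a ∨ c y y' = b) ∧ c y y' ≠ γ :=
    fun y hy y' hy' hyy' => ⟨h2 y (hR y hy).1 y' (hR y' hy').1 hyy', fun h =>
      hM hw (hR y hy).1 (hR y' hy').1 (hR y hy).2 (hR y' hy').2 hyy' γ ⟨hγ y hy, hγ y' hy', h⟩⟩
  have hγab : γ = a ∨ γ = b := hγ y₁ h₁ ▸ h2 w hw y₁ (hR y₁ h₁).1 (hR y₁ h₁).2
  have hother : ∀ y ∈ F, ∀ y' ∈ F, y ≠ y' → c y y' = c y₁ y₂ := by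
    intro y hy y' hy' hyy'
    have := hedge y hy y' hy' hyy'
    have := hedge y₁ h₁ y₂ h₂ h₁₂
    grind
  exact hM (hR y₁ h₁).1 (hR y₂ h₂).1 (hR y₃ h₃).1 h₁₂ h₁₃ h₂₃ _
    ⟨rfl, hother _ h₁ _ h₃ h₁₃, hother _ h₂ _ h₃ h₂₃⟩

variable [DecidableEq C]

def colorsAt (R : Finset V) (c : V → V → C) (w : V) : Finset C := (R.erase w).image (c w)

theorem colorsAt_nonempty (hR : 1 < R.card) (hw : w ∈ R) : (colorsAt R c w).Nonempty :=
  (card_pos.1 (by rw [card_erase_of_mem hw]; omega)).image _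

theorem MonoTriangleFreeOn.card_le_five (hM : MonoTriangleFreeOn R c)
    (h2 : TwoColoredOn R c a b) : R.card ≤ 5 := by
  by_contra! h
  obtain ⟨w, hw⟩ := card_pos.1 (by omega : 0 < R.card)
  have hmaps : ∀ y ∈ R.erase w, c w y ∈ ({a, b} : Finset C) := fun y hy => by
    simpa using h2 w hw y (mem_of_mem_erase hy) (ne_of_mem_erase hy).symm
  obtain ⟨γ, -, hγ⟩ := exists_lt_card_fiber_of_mul_lt_card_of_maps_to hmaps (n := 2) (by
    have := card_le_two (a := a) (b := b); rw [card_erase_of_mem hw]; omega)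
  exact hγ.not_ge (hM.card_le_two_of_forall_color_eq h2 hw (filter_subset _ _)
    fun y hy => (mem_filter.1 hy).2)

theorem MonoTriangleFreeOn.one_lt_card_colorsAt (hM : MonoTriangleFreeOn R c)
    (h2 : TwoColoredOn R c a b) (hR : 4 ≤ R.card) (hw : w ∈ R) :
    1 < (colorsAt R c w).card := by
  by_contra! h
  obtain ⟨w₁, hw₁⟩ := card_pos.1 (by rw [card_erase_of_mem hw]; omega : 0 < (R.erase w).card)
  have := hM.card_le_two_of_forall_color_eq h2 hw subset_rfl
    fun y hy => card_le_one.1 h _ (mem_image_of_mem _ hy) _ (mem_image_of_mem _ hw₁)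
  rw [card_erase_of_mem hw] at this
  omega

theorem MonoTriangleFreeOn.eq_of_card_colorsAt_le_one (hc : ∀ x y, c x y = c y x)
    (hM : MonoTriangleFreeOn R c) (hR : 3 ≤ R.card) (hu : u ∈ R) (hw : w ∈ R)
    (hcu : (colorsAt R c u).card ≤ 1) (hcw : (colorsAt R c w).card ≤ 1) : u = w := by
  by_contra huw
  have hwu : w ∈ R.erase u := mem_erase.2 ⟨Ne.symm huw, hw⟩
  obtain ⟨x, hx⟩ : ((R.erase u).erase w).Nonempty :=
    card_pos.1 (by rw [card_erase_of_mem hwu, card_erase_of_mem hu]; omega)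
  have hxw : x ≠ w := ne_of_mem_erase hx
  have hxu : x ≠ u := ne_of_mem_erase (mem_of_mem_erase hx)
  have hxR : x ∈ R := mem_of_mem_erase (mem_of_mem_erase hx)
  have e₁ : c u x = c u w := card_le_one.1 hcu _
    (mem_image_of_mem _ (mem_erase.2 ⟨hxu, hxR⟩)) _ (mem_image_of_mem _ hwu)
  have e₂ : c w x = c w u := card_le_one.1 hcw _
    (mem_image_of_mem _ (mem_erase.2 ⟨hxw, hxR⟩)) _ (mem_image_of_mem _ (mem_erase.2 ⟨huw, hu⟩))
  exact hM hu hw hxR huw (Ne.symm hxu) (Ne.symm hxw) _ ⟨rfl, e₁, e₂.trans (hc w u)⟩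

theorem MonoTriangleFreeOn.exists_forall_one_lt_card_colorsAt (hc : ∀ x y, c x y = c y x)
    (hM : MonoTriangleFreeOn R c) (hR : 3 ≤ R.card) :
    ∃ w₀ ∈ R, ∀ w ∈ R.erase w₀, 1 < (colorsAt R c w).card := by
  by_cases h1 : ∃ w₀ ∈ R, (colorsAt R c w₀).card ≤ 1
  · obtain ⟨w₀, hw₀, h₀⟩ := h1
    refine ⟨w₀, hw₀, fun w hw => ?_⟩
    by_contra! h
    exact ne_of_mem_erase hw (hM.eq_of_card_colorsAt_le_one hc hR (mem_of_mem_erase hw) hw₀ h h₀)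
  · push Not at h1
    obtain ⟨w₀, hw₀⟩ := card_pos.1 (by omega : 0 < R.card)
    exact ⟨w₀, hw₀, fun w hw => h1 w (mem_of_mem_erase hw)⟩

theorem sum_le_gallaiBound (hc : ∀ x y, c x y = c y x) (hM : MonoTriangleFreeOn R c)
    (h2 : TwoColoredOn R c a b) (hR : 1 < R.card) {T : Finset C}
    (hT : ∀ w ∈ R, colorsAt R c w ⊆ T) {f : V → ℕ}
    (hf : ∀ w ∈ R, f w ≤ gallaiBound (T.card - (colorsAt R c w).card)) :
    ∑ w ∈ R, f w ≤ gallaiBound T.card := by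
  set t := T.card
  have hf₁ : ∀ w ∈ R, f w ≤ gallaiBound (t - 1) := fun w hw => (hf w hw).trans
    (gallaiBound_mono (Nat.sub_le_sub_left (colorsAt_nonempty hR hw).card_pos t))
  have hf₂ : ∀ w ∈ R, 1 < (colorsAt R c w).card → 2 ≤ t ∧ f w ≤ gallaiBound (t - 2) :=
    fun w hw h => ⟨h.trans_le (card_le_card (hT w hw)),
      (hf w hw).trans (gallaiBound_mono (by omega))⟩
  obtain ⟨w₀, hw₀⟩ := card_pos.1 (by omega : 0 < R.card)
  have ht₁ : 1 ≤ t := (colorsAt_nonempty hR hw₀).card_pos.trans_le (card_le_card (hT w₀ hw₀))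
  rcases (by have := hM.card_le_five h2; omega : R.card = 2 ∨ R.card = 3 ∨ 4 ≤ R.card)
    with h | h | h
  · calc ∑ w ∈ R, f w ≤ R.card • gallaiBound (t - 1) := sum_le_card_nsmul _ _ _ hf₁
      _ = 2 * gallaiBound (t - 1) := by rw [h, smul_eq_mul]
      _ ≤ gallaiBound (t - 1 + 1) := two_mul_gallaiBound_le _
      _ = gallaiBound t := by rw [Nat.sub_add_cancel ht₁]
  · obtain ⟨w₀, hw₀, hrest⟩ := hM.exists_forall_one_lt_card_colorsAt hc (by omega)
    obtain ⟨w₁, hw₁⟩ := card_pos.1 (by rw [card_erase_of_mem hw₀]; omega : 0 < (R.erase w₀).card)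
    have ht₂ := (hf₂ w₁ (mem_of_mem_erase hw₁) (hrest w₁ hw₁)).1
    calc ∑ w ∈ R, f w = ∑ w ∈ R.erase w₀, f w + f w₀ := (sum_erase_add _ _ hw₀).symm
      _ ≤ (R.erase w₀).card • gallaiBound (t - 2) + gallaiBound (t - 2 + 1) := by
          rw [show t - 2 + 1 = t - 1 by omega]
          exact add_le_add (sum_le_card_nsmul _ _ _
            fun w hw => (hf₂ w (mem_of_mem_erase hw) (hrest w hw)).2) (hf₁ w₀ hw₀)
      _ = gallaiBound (t - 2 + 1) + 2 * gallaiBound (t - 2) := by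
          rw [card_erase_of_mem hw₀, h, smul_eq_mul, add_comm]
      _ ≤ gallaiBound (t - 2 + 2) := gallaiBound_succ_add_two_mul_le _
      _ = gallaiBound t := by rw [Nat.sub_add_cancel ht₂]
  · have hall := fun w hw => hf₂ w hw (hM.one_lt_card_colorsAt h2 h hw)
    calc ∑ w ∈ R, f w ≤ R.card • gallaiBound (t - 2) :=
          sum_le_card_nsmul _ _ _ fun w hw => (hall w hw).2
      _ ≤ 5 * gallaiBound (t - 2) := by
          rw [smul_eq_mul]; exact Nat.mul_le_mul_right _ (hM.card_le_five h2)
      _ = gallaiBound t := by rw [← gallaiBound_add_two, Nat.sub_add_cancel (hall w₀ hw₀).1]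

theorem IsGallaiPartition.color_not_mem_colorsAt {P : V → V} (hP : IsGallaiPartition s R c P a b)
    (hM : MonoTriangleFreeOn s c) (hx : x ∈ s) (hy : y ∈ s) (hxy : x ≠ y) (hxw : P x = w)
    (hyw : P y = w) : c x y ∉ colorsAt R c w := by
  rintro hcol
  obtain ⟨w', hw', hcol⟩ := mem_image.1 hcol
  have hw'R := mem_of_mem_erase hw'
  have hne : w ≠ w' := (ne_of_mem_erase hw').symm
  refine hM hx hy (hP.subset hw'R) hxy ?_ ?_ (c w w') ⟨hcol.symm, ?_, ?_⟩
  · rintro rfl; exact hne (hxw.symm.trans (hP.rep_self _ hw'R))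
  · rintro rfl; exact hne (hyw.symm.trans (hP.rep_self _ hw'R))
  · rw [hP.color_eq_rep hx hw'R (hxw ▸ hne), hxw]
  · rw [hP.color_eq_rep hy hw'R (hyw ▸ hne), hyw]

end Reduced

theorem card_le_gallaiBound (hc : ∀ x y, c x y = c y x) (hG : GallaiOn s c)
    (hM : MonoTriangleFreeOn s c) {T : Finset C}
    (hT : ∀ x ∈ s, ∀ y ∈ s, x ≠ y → c x y ∈ T) : s.card ≤ gallaiBound T.card := by
  classical
  induction hn : T.card using Nat.strong_induction_on generalizing s T with
  | _ n ih =>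
  subst hn
  rcases le_or_gt s.card 1 with hs | hs
  · exact hs.trans (one_le_gallaiBound _)
  obtain ⟨R, P, a, b, hP⟩ := hG.exists_isGallaiPartition hc hs
  have hcol : ∀ w ∈ R, colorsAt R c w ⊆ T := by
    intro w hw γ hγ
    obtain ⟨w', hw', rfl⟩ := mem_image.1 hγ
    exact hT _ (hP.subset hw) _ (hP.subset (mem_of_mem_erase hw')) (ne_of_mem_erase hw').symm
  rw [card_eq_sum_card_fiberwise hP.rep_mem]
  refine sum_le_gallaiBound hc (hM.mono hP.subset) hP.twoColoredOn hP.one_lt_card hcol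
    fun w hw => ?_
  rw [← card_sdiff_of_subset (hcol w hw)]
  refine ih _ (card_lt_card (sdiff_ssubset (hcol w hw) (colorsAt_nonempty hP.one_lt_card hw)))
    (hG.mono (filter_subset _ _)) (hM.mono (filter_subset _ _)) (fun x hx y hy hxy => ?_) rfl
  obtain ⟨hx, hxw⟩ := mem_filter.1 hx
  obtain ⟨hy, hyw⟩ := mem_filter.1 hy
  exact mem_sdiff.2 ⟨hT x hx y hy hxy, hP.color_not_mem_colorsAt hM hx hy hxy hxw hyw⟩

section Construction

variable {A W D E : Type*}

theorem GallaiOn.comp [Fintype V] {V' C' : Type*} [Fintype V'] (hG : GallaiOn univ c)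
    {e : V' → V} (he : e.Injective) (f : C → C') :
    GallaiOn univ fun x y => f (c (e x) (e y)) := by
  intro x _ y _ z _ hxy hxz hyz
  rcases hG (mem_univ (e x)) (mem_univ (e y)) (mem_univ (e z)) (he.ne hxy) (he.ne hxz)
    (he.ne hyz) with h | h | h <;> simp only [h, true_or, or_true]

theorem MonoTriangleFreeOn.comp [Fintype V] {V' C' : Type*} [Fintype V']
    (hM : MonoTriangleFreeOn univ c) {e : V' → V} (he : e.Injective) {f : C → C'}
    (hf : f.Injective) : MonoTriangleFreeOn univ fun x y => f (c (e x) (e y)) := by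
  rintro x _ y _ z _ hxy hxz hyz col ⟨h₁, h₂, h₃⟩
  exact hM (mem_univ (e x)) (mem_univ (e y)) (mem_univ (e z)) (he.ne hxy) (he.ne hxz)
    (he.ne hyz) _ ⟨hf (h₁.trans h₂.symm), rfl, hf (h₃.trans h₂.symm)⟩

variable [DecidableEq A]

def blowUp (cA : A → A → D) (cW : W → W → E) (p q : A × W) : E ⊕ D :=
  if p.1 = q.1 then .inl (cW p.2 q.2) else .inr (cA p.1 q.1)

variable {cA : A → A → D} {cW : W → W → E}

theorem blowUp_symm (hA : ∀ i j, cA i j = cA j i) (hW : ∀ x y, cW x y = cW y x) (p q : A × W) :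
    blowUp cA cW p q = blowUp cA cW q p := by
  unfold blowUp
  by_cases h : p.1 = q.1
  · rw [if_pos h, if_pos h.symm, hW]
  · rw [if_neg h, if_neg (Ne.symm h), hA]

variable [Fintype A] [Fintype W]

theorem GallaiOn.blowUp (hA : ∀ i j, cA i j = cA j i) (hGA : GallaiOn univ cA)
    (hGW : GallaiOn univ cW) : GallaiOn univ (blowUp cA cW) := by
  rintro ⟨i, x⟩ - ⟨j, y⟩ - ⟨l, z⟩ - hxy hxz hyz
  simp only [GallaiColoring.blowUp]
  by_cases hij : i = j
  · subst hij
    by_cases hil : i = l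
    · subst hil
      simp only [if_true, Sum.inl.injEq]
      exact hGW (mem_univ x) (mem_univ y) (mem_univ z) (fun h => hxy (h ▸ rfl))
        (fun h => hxz (h ▸ rfl)) (fun h => hyz (h ▸ rfl))
    · simp [hil]
  · by_cases hil : i = l
    · subst hil
      simp [hij, Ne.symm hij, hA i j]
    · by_cases hjl : j = l
      · subst hjl
        simp [hij]
      · simp only [if_neg hij, if_neg hil, if_neg hjl, Sum.inr.injEq]
        exact hGA (mem_univ i) (mem_univ j) (mem_univ l) hij hil hjl

theorem MonoTriangleFreeOn.blowUp (hMA : MonoTriangleFreeOn univ cA)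
    (hMW : MonoTriangleFreeOn univ cW) : MonoTriangleFreeOn univ (blowUp cA cW) := by
  rintro ⟨i, x⟩ - ⟨j, y⟩ - ⟨l, z⟩ - hxy hxz hyz col ⟨h₁, h₂, h₃⟩
  simp only [GallaiColoring.blowUp] at h₁ h₂ h₃
  by_cases hij : i = j
  · subst hij
    rw [if_pos rfl] at h₁
    by_cases hil : i = l
    · subst hil
      rw [if_pos rfl] at h₂ h₃
      subst h₁
      exact hMW (mem_univ x) (mem_univ y) (mem_univ z) (fun h => hxy (h ▸ rfl))
        (fun h => hxz (h ▸ rfl)) (fun h => hyz (h ▸ rfl)) _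
        ⟨rfl, Sum.inl_injective h₂, Sum.inl_injective h₃⟩
    · rw [if_neg hil] at h₂
      exact Sum.inl_ne_inr (h₁.trans h₂.symm)
  · rw [if_neg hij] at h₁
    by_cases hil : i = l
    · rw [if_pos hil] at h₂
      exact Sum.inr_ne_inl (h₁.trans h₂.symm)
    rw [if_neg hil] at h₂
    by_cases hjl : j = l
    · rw [if_pos hjl] at h₃
      exact Sum.inr_ne_inl (h₁.trans h₃.symm)
    rw [if_neg hjl] at h₃
    subst h₁
    exact hMA (mem_univ i) (mem_univ j) (mem_univ l) hij hil hjl _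
      ⟨rfl, Sum.inr_injective h₂, Sum.inr_injective h₃⟩

end Construction

def pentagon (i j : Fin 5) : Fin 2 := if i - j = 1 ∨ j - i = 1 then 0 else 1

theorem pentagon_symm : ∀ i j, pentagon i j = pentagon j i := by decide

theorem gallaiOn_pentagon : GallaiOn univ pentagon := by unfold GallaiOn; decide

theorem monoTriangleFreeOn_pentagon : MonoTriangleFreeOn univ pentagon := by
  unfold MonoTriangleFreeOn; decide

theorem exists_coloring_card_eq_gallaiBound : ∀ k, 1 ≤ k → ∃ (W : Type) (_ : Fintype W) (c : W → W → Fin k),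
    Fintype.card W = gallaiBound k ∧ (∀ x y, c x y = c y x) ∧ GallaiOn univ c ∧
      MonoTriangleFreeOn univ c
  | 1, _ => ⟨Fin 2, inferInstance, fun _ _ => 0, rfl, fun _ _ => rfl,
      fun _ _ _ _ _ _ _ _ _ => Or.inl rfl, by unfold MonoTriangleFreeOn; decide⟩
  | 2, _ => ⟨Fin 5, inferInstance, pentagon, rfl, pentagon_symm, gallaiOn_pentagon,
      monoTriangleFreeOn_pentagon⟩
  | k + 3, _ => by
    obtain ⟨W, _, c, hcard, hc, hG, hM⟩ := exists_coloring_card_eq_gallaiBound (k + 1) (by omega)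
    let e : Fin (k + 1) ⊕ Fin 2 ≃ Fin (k + 3) := finSumFinEquiv
    refine ⟨Fin 5 × W, inferInstance, fun p q => e (blowUp pentagon c p q), ?_,
      fun p q => congrArg e (blowUp_symm pentagon_symm hc p q),
      (gallaiOn_pentagon.blowUp pentagon_symm hG).comp Function.injective_id _,
      (monoTriangleFreeOn_pentagon.blowUp hM).comp Function.injective_id e.injective⟩
    rw [Fintype.card_prod, Fintype.card_fin, hcard]
    rfl

theorem exists_coloring_fin_of_le_gallaiBound {k n : ℕ} (hk : 1 ≤ k) (hn : n ≤ gallaiBound k) :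
    ∃ c : Fin n → Fin n → Fin k, (∀ x y, c x y = c y x) ∧ GallaiOn univ c ∧
      MonoTriangleFreeOn univ c := by
  obtain ⟨W, _, c, hcard, hc, hG, hM⟩ := exists_coloring_card_eq_gallaiBound k hk
  obtain ⟨e⟩ := Function.Embedding.nonempty_of_card_le (α := Fin n) (β := W)
    (by rw [Fintype.card_fin, hcard]; exact hn)
  exact ⟨fun x y => c (e x) (e y), fun x y => hc _ _, hG.comp e.injective id,
    hM.comp e.injective Function.injective_id⟩

theorem hasRainbowTriangle_iff_not_gallaiOn [Fintype V] :
    HasRainbowTriangle c ↔ ¬ GallaiOn univ c := by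
  simp only [HasRainbowTriangle, GallaiOn, mem_univ, forall_const, not_forall, not_or,
    exists_prop]

theorem hasMonoCycle_three_iff [Fintype V] (hc : ∀ x y, c x y = c y x) :
    HasMonoCycle c 3 ↔ ¬ MonoTriangleFreeOn univ c := by
  constructor
  · rintro ⟨col, v, hv, hcol⟩ hM
    exact hM (mem_univ (v 0)) (mem_univ (v 1)) (mem_univ (v 2)) (hv.ne (by decide))
      (hv.ne (by decide)) (hv.ne (by decide)) col ⟨hcol 0, (hc _ _).trans (hcol 2), hcol 1⟩
  · intro h
    simp only [MonoTriangleFreeOn, not_forall, not_not] at h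
    obtain ⟨x, -, y, -, z, -, hxy, hxz, hyz, col, h₁, h₂, h₃⟩ := h
    refine ⟨col, ![x, y, z], ?_, ?_⟩
    · intro i j hij
      fin_cases i <;> fin_cases j <;> simp_all [eq_comm]
    · intro i
      fin_cases i
      exacts [h₁, h₃, (hc _ _).trans h₂]

end GallaiColoring

open GallaiColoring

/-- Gallai–Ramsey number for triangles (Chung–Graham):
`gr_k(K₃, K₃) = 5^{k/2} + 1` for even `k` and `2·5^{(k-1)/2} + 1` for odd `k`. -/
theorem gallaiRamsey_K3 (k : ℕ) (hk : 1 ≤ k) :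
    IsLeast {n : ℕ | 0 < n ∧ ∀ c : Fin n → Fin n → Fin k,
        (∀ x y, c x y = c y x) →
        HasRainbowTriangle c ∨ HasMonoCycle c 3}
      (if Even k then 5 ^ (k / 2) + 1 else 2 * 5 ^ ((k - 1) / 2) + 1) := by
  rw [show (if Even k then 5 ^ (k / 2) + 1 else 2 * 5 ^ ((k - 1) / 2) + 1) =
    gallaiBound k + 1 by rw [gallaiBound_eq]; split_ifs <;> rfl]
  refine ⟨⟨Nat.succ_pos _, fun c hc => ?_⟩, fun n ⟨_, hn⟩ => ?_⟩
  · rw [hasRainbowTriangle_iff_not_gallaiOn, hasMonoCycle_three_iff hc, ← not_and_or]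
    rintro ⟨hG, hM⟩
    have := card_le_gallaiBound hc hG hM (T := univ) fun _ _ _ _ _ => mem_univ _
    simp at this
  · by_contra! hlt
    obtain ⟨c, hc, hG, hM⟩ := exists_coloring_fin_of_le_gallaiBound hk (n := n) (by omega)
    have := hn c hc
    rw [hasRainbowTriangle_iff_not_gallaiOn, hasMonoCycle_three_iff hc] at this
    tauto
end

section
/- Let G be a complete graph with an edge-coloring c in which some fixed color (call it blue) admits no monochromatic cycle C_9 (i.e., G contains no cycle on 9 vertices all of whose edges are blue). Let S be a set of vertices of G and let u, v, w be three distinct vertices of G not in S such that every edge between {u, v, w} and S is colored blue. Then there exists a subset V_H ⊆ S with |V_H| ≤ 4 such that no edge of G with both endpoints in S \ V_H is colored blue. -/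
/-! Three pairwise disjoint blue edges `ab`, `de`, `fg` inside `S`, linked through the vertices
`u, v, w` that see all of `S` in blue, form the blue cycle `u a b v d e w f g`. So the blue graph
on `S` has no matching of three edges, and the at most four vertices of a maximal matching meet
every blue edge of `S`. -/

section Matching

variable {V : Type*}

def IsMatchingOn (r : V → V → Prop) (S : Finset V) (ps : List (V × V)) : Prop :=
  (ps.flatMap fun p => [p.1, p.2]).Nodup ∧ ∀ p ∈ ps, p.1 ∈ S ∧ p.2 ∈ S ∧ r p.1 p.2

theorem IsMatchingOn.cons {r : V → V → Prop} {S : Finset V} {ps : List (V × V)}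
    (hps : IsMatchingOn r S ps) {a b : V} (ha : a ∈ S) (hb : b ∈ S) (hab : a ≠ b) (hr : r a b)
    (ha' : a ∉ ps.flatMap fun p => [p.1, p.2]) (hb' : b ∉ ps.flatMap fun p => [p.1, p.2]) :
    IsMatchingOn r S ((a, b) :: ps) := by
  refine ⟨?_, ?_⟩
  · simp only [List.flatMap_cons, List.cons_append, List.nil_append, List.nodup_cons,
      List.mem_cons, not_or]
    exact ⟨⟨hab, ha'⟩, hb', hps.1⟩
  · simp only [List.mem_cons, forall_eq_or_imp]
    exact ⟨⟨ha, hb, hr⟩, hps.2⟩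

theorem exists_edge_of_not_pairwise {r : V → V → Prop} {s : Set V}
    (h : ¬ s.Pairwise fun x y => ¬ r x y) : ∃ a ∈ s, ∃ b ∈ s, a ≠ b ∧ r a b := by
  simpa [Set.Pairwise] using h

/-- Greedy matching: the vertices of a maximal matching cover every edge. -/
theorem exists_cover_or_isMatchingOn [DecidableEq V] (r : V → V → Prop) (S : Finset V) :
    ∀ k : ℕ, (∃ T ⊆ S, T.card ≤ 2 * k ∧ (↑(S \ T) : Set V).Pairwise fun x y => ¬ r x y) ∨
      ∃ ps, ps.length = k + 1 ∧ IsMatchingOn r S ps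
  | 0 => by
    by_cases hS : (↑S : Set V).Pairwise fun x y => ¬ r x y
    · exact Or.inl ⟨∅, Finset.empty_subset S, le_rfl, by simpa using hS⟩
    · obtain ⟨a, ha, b, hb, hab, hr⟩ := exists_edge_of_not_pairwise hS
      exact Or.inr ⟨[(a, b)], rfl, IsMatchingOn.cons (ps := []) ⟨List.nodup_nil, by simp⟩
        ha hb hab hr List.not_mem_nil List.not_mem_nil⟩
  | k + 1 => by
    obtain ⟨T, hTS, hT, hfree⟩ | ⟨ps, hlen, hps⟩ := exists_cover_or_isMatchingOn r S k
    · exact Or.inl ⟨T, hTS, by omega, hfree⟩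
    set T := (ps.flatMap fun p => [p.1, p.2]).toFinset with hT
    by_cases hfree : (↑(S \ T) : Set V).Pairwise fun x y => ¬ r x y
    · refine Or.inl ⟨T, ?_, ?_, hfree⟩
      · intro x hx
        simp only [hT, List.mem_toFinset, List.mem_flatMap, List.mem_cons, List.not_mem_nil,
          or_false] at hx
        obtain ⟨p, hp, rfl | rfl⟩ := hx
        exacts [(hps.2 p hp).1, (hps.2 p hp).2.1]
      · calc T.card ≤ (ps.flatMap fun p => [p.1, p.2]).length := List.toFinset_card_le _
          _ = 2 * (k + 1) := by simp [List.length_flatMap, hlen]; ring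
    · obtain ⟨a, ha, b, hb, hab, hr⟩ := exists_edge_of_not_pairwise hfree
      simp only [Finset.coe_sdiff, Set.mem_sdiff, Finset.mem_coe, hT, List.mem_toFinset] at ha hb
      exact Or.inr ⟨(a, b) :: ps, by simp [hlen], hps.cons ha.1 hb.1 hab hr ha.2 hb.2⟩

theorem hasMonoCycleIn_nine_of_isMatchingOn {C : Type*} [DecidableEq V] {c : V → V → C}
    {col : C} (hsym : ∀ x y, c x y = c y x) {S : Finset V} {u v w a b d e f g : V}
    (hhubs : [u, v, w].Nodup) (hout : ∀ x ∈ [u, v, w], x ∉ S)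
    (hcomp : ∀ x ∈ [u, v, w], ∀ y ∈ S, c x y = col)
    (hM : IsMatchingOn (fun x y => c x y = col) S [(a, b), (d, e), (f, g)]) :
    HasMonoCycleIn c 9 col := by
  obtain ⟨hnodup, hedges⟩ := hM
  simp only [List.flatMap_cons, List.flatMap_nil, List.cons_append, List.nil_append,
    List.append_nil] at hnodup
  simp only [List.mem_cons, List.not_mem_nil, or_false, forall_eq_or_imp, forall_eq]
    at hedges hcomp
  obtain ⟨⟨ha, hb, hab⟩, ⟨hd, he, hde⟩, ⟨hf, hg, hfg⟩⟩ := hedges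
  have hperm : [u, a, b, v, d, e, w, f, g].Perm ([u, v, w] ++ [a, b, d, e, f, g]) := by
    rw [List.perm_iff_count]
    intro x
    simp only [List.count_cons, List.cons_append, List.nil_append]
    omega
  refine ⟨[u, a, b, v, d, e, w, f, g].get, List.nodup_iff_injective_get.mp ?_, ?_⟩
  · refine hperm.nodup_iff.2 (List.nodup_append.2 ⟨hhubs, hnodup, ?_⟩)
    rintro x hx y hy rfl
    simp only [List.mem_cons, List.not_mem_nil, or_false] at hy
    exact hout x hx (by rcases hy with rfl | rfl | rfl | rfl | rfl | rfl <;> assumption)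
  · intro i
    fin_cases i
    · exact hcomp.1 a ha
    · exact hab
    · exact (hsym b v).trans (hcomp.2.1 b hb)
    · exact hcomp.2.1 d hd
    · exact hde
    · exact (hsym e w).trans (hcomp.2.2 e he)
    · exact hcomp.2.2 f hf
    · exact hfg
    · exact (hsym g u).trans (hcomp.1 g hg)

end Matching

/-- If a complete graph has no blue `C₉` and three distinct vertices `u, v, w`
outside a vertex set `S` are joined to all of `S` in blue, then deleting at
most four vertices of `S` destroys all blue edges inside `S`. -/
theorem blue_complete_three_vertices {V C : Type*} [DecidableEq V]
    (c : V → V → C) (blue : C) (hsym : ∀ x y, c x y = c y x)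
    (hblue : ¬ HasMonoCycleIn c 9 blue)
    (S : Finset V) (u v w : V)
    (huv : u ≠ v) (huw : u ≠ w) (hvw : v ≠ w)
    (hu : u ∉ S) (hv : v ∉ S) (hw : w ∉ S)
    (hcomp : ∀ x ∈ ({u, v, w} : Finset V), ∀ y ∈ S, c x y = blue) :
    ∃ T ⊆ S, T.card ≤ 4 ∧
      ∀ x ∈ S \ T, ∀ y ∈ S \ T, x ≠ y → c x y ≠ blue := by
  obtain ⟨T, hTS, hT, hfree⟩ | ⟨ps, hlen, hps⟩ :=
    exists_cover_or_isMatchingOn (fun x y => c x y = blue) S 2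
  · exact ⟨T, hTS, hT, fun x hx y hy hxy => hfree hx hy hxy⟩
  obtain ⟨⟨a, b⟩, ⟨d, e⟩, ⟨f, g⟩, rfl⟩ := List.length_eq_three.1 hlen
  refine absurd (hasMonoCycleIn_nine_of_isMatchingOn (u := u) (v := v) (w := w) hsym ?_ ?_ ?_ hps)
    hblue
  · simp [huv, huw, hvw]
  · simp [hu, hv, hw]
  · exact fun x hx => hcomp x (by simpa using hx)
end

section
/- Let G be a complete graph with an edge-coloring c in which some fixed color (call it blue) admits no monochromatic cycle C_9 (i.e., G contains no cycle on 9 vertices all of whose edges are blue). Let Y and Z be disjoint sets of vertices of G with |Y| ≥ 4 and |Z| ≥ 5 such that every edge between Y and Z is colored blue. Then no edge of G with both endpoints in Z is colored blue. -/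
/-!
Take four vertices `a₀, …, a₃` of `Y` and five vertices `z₀, …, z₄` of `Z` with `z₀ = y` and
`z₄ = x`, where `xy` is a blue edge inside `Z`. Since `Y` and `Z` are joined in blue,
`z₀ a₀ z₁ a₁ z₂ a₂ z₃ a₃ z₄` is a blue path, and the edge `z₄ z₀ = xy` closes it to a blue `C₉`.
-/

theorem Finset.exists_injective_fin_mem_of_first_last {α : Type*} [DecidableEq α]
    {s : Finset α} {k : ℕ} (hk : k + 2 ≤ s.card) {x y : α} (hx : x ∈ s) (hy : y ∈ s)
    (hxy : x ≠ y) :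
    ∃ z : Fin (k + 2) → α, Function.Injective z ∧ (∀ i, z i ∈ s) ∧
      z 0 = x ∧ z (Fin.last (k + 1)) = y := by
  have hcard : Fintype.card (Fin k) ≤ (s \ {x, y}).card := by
    rw [Fintype.card_fin, Finset.card_sdiff_of_subset (by simp [Finset.insert_subset_iff, hx, hy]),
      Finset.card_pair hxy]
    omega
  obtain ⟨w, hw⟩ := Function.Embedding.exists_of_card_le_finset hcard
  have hw' : ∀ i, w i ∈ s ∧ w i ≠ x ∧ w i ≠ y := fun i => by
    simpa using hw (Set.mem_range_self i)
  refine ⟨Fin.cons x (Fin.snoc w y), ?_, ?_, rfl, ?_⟩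
  · refine Fin.cons_injective_of_injective ?_ (Fin.snoc_injective_of_injective w.injective ?_)
    · rintro ⟨i, hi⟩
      induction i using Fin.lastCases with
      | last => exact hxy (by simpa using hi.symm)
      | cast i => exact (hw' i).2.1 (by simpa using hi)
    · rintro ⟨i, hi⟩
      exact (hw' i).2.2 hi
  · intro i
    induction i using Fin.cases with
    | zero => simpa using hx
    | succ i =>
      induction i using Fin.lastCases with
      | last => simpa using hy
      | cast i => simpa using (hw' i).1
  · simp [← Fin.succ_last]

theorem hasMonoCycleIn_of_completeJoin {V C : Type*} (c : V → V → C) (col : C) {k : ℕ}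
    (hsym : ∀ x y, c x y = c y x)
    {Y Z : Finset V} (hdisj : Disjoint Y Z) (hcomp : ∀ y ∈ Y, ∀ z ∈ Z, c y z = col)
    {a : Fin k → V} (ha : Function.Injective a) (haY : ∀ i, a i ∈ Y)
    {z : Fin (k + 1) → V} (hz : Function.Injective z) (hzZ : ∀ i, z i ∈ Z)
    (hclose : c (z (Fin.last k)) (z 0) = col) :
    HasMonoCycleIn c (2 * k + 1) col := by
  let v : Fin (2 * k + 1) → V := fun i =>
    if h : i.val % 2 = 0 then z ⟨i / 2, by omega⟩ else a ⟨i / 2, by omega⟩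
  have hYZ : ∀ i j, a i ≠ z j := fun i j h =>
    Finset.disjoint_left.mp hdisj (haY i) (h ▸ hzZ j)
  refine ⟨v, ?_, fun i => ?_⟩
  · intro i j hij
    simp only [v] at hij
    split_ifs at hij with hi hj hj
    · have := Fin.mk.inj (hz hij); omega
    · exact absurd hij.symm (hYZ _ _)
    · exact absurd hij (hYZ _ _)
    · have := Fin.mk.inj (ha hij); omega
  by_cases hi : i = Fin.last (2 * k)
  · subst hi
    have hlast : v (Fin.last (2 * k)) = z (Fin.last k) := by
      simp [v, Fin.last]
    rw [Fin.last_add_one, hlast]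
    simpa [v] using hclose
  · have hlt : i.val < 2 * k := Fin.val_lt_last hi
    have hsucc : i + 1 = ⟨i + 1, by omega⟩ := Fin.ext (Fin.val_add_one_of_lt' (by omega))
    rw [hsucc]
    simp only [v]
    split_ifs with h1 h2 h2
    · omega
    · rw [hsym]; convert hcomp _ (haY _) _ (hzZ _) using 4
    · convert hcomp _ (haY _) _ (hzZ _) using 4
    · omega

/-- If a complete graph has no blue `C₉` and disjoint vertex sets `Y, Z` with
`|Y| ≥ 4` and `|Z| ≥ 5` are completely joined in blue, then there is no blue
edge inside `Z`. -/
theorem blue_complete_no_blue_edge_inside {V C : Type*} [DecidableEq V]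
    (c : V → V → C) (blue : C) (hsym : ∀ x y, c x y = c y x)
    (hblue : ¬ HasMonoCycleIn c 9 blue)
    (Y Z : Finset V) (hdisj : Disjoint Y Z)
    (hY : 4 ≤ Y.card) (hZ : 5 ≤ Z.card)
    (hcomp : ∀ y ∈ Y, ∀ z ∈ Z, c y z = blue) :
    ∀ x ∈ Z, ∀ y ∈ Z, x ≠ y → c x y ≠ blue := by
  intro x hx y hy hxy hxy_blue
  obtain ⟨a, haY⟩ := Function.Embedding.exists_of_card_le_finset
    (by simpa using hY : Fintype.card (Fin 4) ≤ Y.card)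
  obtain ⟨z, hz, hzZ, hz0, hzlast⟩ :=
    Finset.exists_injective_fin_mem_of_first_last (k := 3) hZ hy hx hxy.symm
  refine hblue (hasMonoCycleIn_of_completeJoin c blue hsym hdisj hcomp a.injective
    (fun i => haY (Set.mem_range_self i)) hz hzZ ?_)
  rwa [hz0, hzlast]
end
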